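/- Cycle-normalization: for every CLKID^ω pre-proof (D, C) there exists a cycle-normal CLKID^ω pre-proof (D', C') (one in which each companion is an ancestor of its corresponding bud) whose tree-unfolding is equal to the tree-unfolding of (D, C). Moreover, the same rules occur in D' as in D (in particular, if (D, C) is cut-free then so is (D', C')). -/

import Mathlib

namespace CLKID

/-- Terms of the language: variables, the constant `0`, and the unary function `s`. -/
inductive Tm : Type where
  | var : ℕ → Tm
  | zero : Tm
  | s : Tm → Tm
deriving DecidableEq

/-- `sIter n t` is the term `s^n t`. -/
def sIter : ℕ → Tm → Tm
  | 0, t => t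
  | n + 1, t => Tm.s (sIter n t)

/-- Substitution on terms. -/
def Tm.subst (θ : ℕ → Tm) : Tm → Tm
  | .var x => θ x
  | .zero => .zero
  | .s t => .s (t.subst θ)

/-- Free variables of a term. -/
def Tm.fv : Tm → Set ℕ
  | .var x => {x}
  | .zero => ∅
  | .s t => t.fv

/-- Subterms of a term. -/
def Tm.sub : Tm → Set Tm
  | .var x => {Tm.var x}
  | .zero => {Tm.zero}
  | .s t => insert (Tm.s t) t.sub

/-- The variable of a term (`none` if the term is of the form `s^n 0`). -/
def Tm.varOf : Tm → Option ℕ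
  | .var x => some x
  | .zero => none
  | .s t => t.varOf

/-- Formulas: equations, the two inductive-predicate atoms `Add1`/`Add2`,
    and the usual first-order connectives and quantifiers. -/
inductive Fm : Type where
  | eq : Tm → Tm → Fm
  | add1 : Tm → Tm → Tm → Fm
  | add2 : Tm → Tm → Tm → Fm
  | not : Fm → Fm
  | and : Fm → Fm → Fm
  | or : Fm → Fm → Fm
  | imp : Fm → Fm → Fm
  | all : ℕ → Fm → Fm
  | ex : ℕ → Fm → Fm
deriving DecidableEq

/-- Substitution on formulas. -/
def Fm.subst (θ : ℕ → Tm) : Fm → Fm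
  | .eq t u => .eq (t.subst θ) (u.subst θ)
  | .add1 a b c => .add1 (a.subst θ) (b.subst θ) (c.subst θ)
  | .add2 a b c => .add2 (a.subst θ) (b.subst θ) (c.subst θ)
  | .not φ => .not (φ.subst θ)
  | .and φ ψ => .and (φ.subst θ) (ψ.subst θ)
  | .or φ ψ => .or (φ.subst θ) (ψ.subst θ)
  | .imp φ ψ => .imp (φ.subst θ) (ψ.subst θ)
  | .all x φ => .all x (φ.subst (Function.update θ x (Tm.var x)))
  | .ex x φ => .ex x (φ.subst (Function.update θ x (Tm.var x)))

/-- Free variables of a formula. -/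
def Fm.fv : Fm → Set ℕ
  | .eq t u => t.fv ∪ u.fv
  | .add1 a b c => a.fv ∪ b.fv ∪ c.fv
  | .add2 a b c => a.fv ∪ b.fv ∪ c.fv
  | .not φ => φ.fv
  | .and φ ψ => φ.fv ∪ ψ.fv
  | .or φ ψ => φ.fv ∪ ψ.fv
  | .imp φ ψ => φ.fv ∪ ψ.fv
  | .all x φ => φ.fv \ {x}
  | .ex x φ => φ.fv \ {x}

/-- Terms occurring in a formula. -/
def Fm.tms : Fm → Set Tm
  | .eq t u => t.sub ∪ u.sub
  | .add1 a b c => a.sub ∪ b.sub ∪ c.sub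
  | .add2 a b c => a.sub ∪ b.sub ∪ c.sub
  | .not φ => φ.tms
  | .and φ ψ => φ.tms ∪ ψ.tms
  | .or φ ψ => φ.tms ∪ ψ.tms
  | .imp φ ψ => φ.tms ∪ ψ.tms
  | .all _ φ => φ.tms
  | .ex _ φ => φ.tms

/-- The substitution `[x := t]`. -/
def sub1 (x : ℕ) (t : Tm) : ℕ → Tm := fun y => if y = x then t else Tm.var y

/-- The simultaneous substitution `[v1 := t, v2 := u]`. -/
def sub2 (v1 v2 : ℕ) (t u : Tm) : ℕ → Tm :=
  fun z => if z = v1 then t else if z = v2 then u else Tm.var z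

/-- `≡_Γ`: the smallest congruence relation on terms containing all pairs `(t, u)`
    with the equation `t = u` in `Γ`. -/
inductive EqvTm (Γ : Set Fm) : Tm → Tm → Prop where
  | base {t u : Tm} : Fm.eq t u ∈ Γ → EqvTm Γ t u
  | refl (t : Tm) : EqvTm Γ t t
  | symm {t u : Tm} : EqvTm Γ t u → EqvTm Γ u t
  | trans {t u v : Tm} : EqvTm Γ t u → EqvTm Γ u v → EqvTm Γ t v
  | sCongr {t u : Tm} : EqvTm Γ t u → EqvTm Γ (Tm.s t) (Tm.s u)

/-- `t ~_Γ u` : `s^n t ≡_Γ s^m u` for some naturals `n`, `m`. -/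
def DepTm (Γ : Set Fm) (t u : Tm) : Prop := ∃ n m : ℕ, EqvTm Γ (sIter n t) (sIter m u)

/-- A sequent: a pair of finite sets of formulas. -/
structure Seq where
  ant : Finset Fm
  suc : Finset Fm

/-- The antecedent of a sequent, as a set of formulas. -/
def antSet (S : Seq) : Set Fm := ↑S.ant

/-- `[Γ]` from Lemma on chains: `{ s^n t1 = s^n t2 | t1 = t2 ∈ Γ or t2 = t1 ∈ Γ }`. -/
def brkt (Γ : Set Fm) : Set Fm :=
  {φ | ∃ (n : ℕ) (t1 t2 : Tm), φ = Fm.eq (sIter n t1) (sIter n t2) ∧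
        (Fm.eq t1 t2 ∈ Γ ∨ Fm.eq t2 t1 ∈ Γ)}

/-- `B1(Γ ⊢ Δ)` : second arguments of `Add1` atoms in the consequent. -/
def B1 (S : Seq) : Set Tm := {b | ∃ a c, Fm.add1 a b c ∈ S.suc}

/-- `C(Γ ⊢ Δ)` : third arguments of `Add2` atoms in the antecedent
    or `Add1` atoms in the consequent. -/
def Cset (S : Seq) : Set Tm :=
  {c | (∃ a b, Fm.add2 a b c ∈ S.ant) ∨ (∃ a b, Fm.add1 a b c ∈ S.suc)}

/-- Index sequent. -/
def IndexSequent (S : Seq) : Prop :=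
  (∀ t ∈ B1 S, ∀ u ∈ Cset S, ¬ DepTm (antSet S) t u) ∧
  (∀ b ∈ B1 S, ∀ b' ∈ B1 S, ∀ n m : ℕ, EqvTm (antSet S) (sIter n b) (sIter m b') → n = m)

/-! ## The cyclic proof systems `CLKID^ω` and `CLKID^ω_a` -/

/-- Rule labels; each label carries the instance data needed to describe the
    rule application (principal formulas, substitutions, case variables, ...).
    `bud` labels bud leaves of cyclic derivation trees. -/
inductive Rule : Type where
  | ax
  | weak
  | cut (φ : Fm)
  | subst (θ : ℕ → Tm)
  | negL (φ : Fm)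
  | negR (φ : Fm)
  | andL (φ ψ : Fm)
  | andR (φ ψ : Fm)
  | orL (φ ψ : Fm)
  | orR (φ ψ : Fm)
  | impL (φ ψ : Fm)
  | impR (φ ψ : Fm)
  | allL (x : ℕ) (t : Tm) (φ : Fm)
  | allR (x : ℕ) (φ : Fm)
  | exL (x : ℕ) (φ : Fm)
  | exR (x : ℕ) (t : Tm) (φ : Fm)
  | eqR (t : Tm)
  | eqL (v1 v2 : ℕ) (t u : Tm)
  | eqLa (v1 v2 : ℕ) (t u : Tm)
  | add1R1
  | add1R2 (a b c : Tm)
  | add2R1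
  | add2R2 (a b c : Tm)
  | caseAdd1 (a b c : Tm) (x y z : ℕ)
  | caseAdd2 (a b c : Tm) (x y z : ℕ)
  | bud

/-- `Inf r S L` : the sequent `S` follows from the list of premises `L`
    by the rule (instance) `r`. -/
inductive Inf : Rule → Seq → List Seq → Prop where
  | ax {Γ Δ : Finset Fm} :
      (Γ ∩ Δ).Nonempty → Inf .ax ⟨Γ, Δ⟩ []
  | weak {Γ Δ Γ' Δ' : Finset Fm} :
      Γ' ⊆ Γ → Δ' ⊆ Δ → Inf .weak ⟨Γ, Δ⟩ [⟨Γ', Δ'⟩]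
  | cut {Γ Δ : Finset Fm} {φ : Fm} :
      Inf (.cut φ) ⟨Γ, Δ⟩ [⟨Γ, insert φ Δ⟩, ⟨insert φ Γ, Δ⟩]
  | subst {Γ Δ : Finset Fm} {θ : ℕ → Tm} :
      Inf (.subst θ) ⟨Γ.image (Fm.subst θ), Δ.image (Fm.subst θ)⟩ [⟨Γ, Δ⟩]
  | negL {Γ Δ : Finset Fm} {φ : Fm} :
      Inf (.negL φ) ⟨insert (.not φ) Γ, Δ⟩ [⟨Γ, insert φ Δ⟩]
  | negR {Γ Δ : Finset Fm} {φ : Fm} :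
      Inf (.negR φ) ⟨Γ, insert (.not φ) Δ⟩ [⟨insert φ Γ, Δ⟩]
  | andL {Γ Δ : Finset Fm} {φ ψ : Fm} :
      Inf (.andL φ ψ) ⟨insert (.and φ ψ) Γ, Δ⟩ [⟨insert φ (insert ψ Γ), Δ⟩]
  | andR {Γ Δ : Finset Fm} {φ ψ : Fm} :
      Inf (.andR φ ψ) ⟨Γ, insert (.and φ ψ) Δ⟩ [⟨Γ, insert φ Δ⟩, ⟨Γ, insert ψ Δ⟩]
  | orL {Γ Δ : Finset Fm} {φ ψ : Fm} :
      Inf (.orL φ ψ) ⟨insert (.or φ ψ) Γ, Δ⟩ [⟨insert φ Γ, Δ⟩, ⟨insert ψ Γ, Δ⟩]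
  | orR {Γ Δ : Finset Fm} {φ ψ : Fm} :
      Inf (.orR φ ψ) ⟨Γ, insert (.or φ ψ) Δ⟩ [⟨Γ, insert φ (insert ψ Δ)⟩]
  | impL {Γ Δ : Finset Fm} {φ ψ : Fm} :
      Inf (.impL φ ψ) ⟨insert (.imp φ ψ) Γ, Δ⟩ [⟨Γ, insert φ Δ⟩, ⟨insert ψ Γ, Δ⟩]
  | impR {Γ Δ : Finset Fm} {φ ψ : Fm} :
      Inf (.impR φ ψ) ⟨Γ, insert (.imp φ ψ) Δ⟩ [⟨insert φ Γ, insert ψ Δ⟩]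
  | allL {Γ Δ : Finset Fm} {x : ℕ} {t : Tm} {φ : Fm} :
      Inf (.allL x t φ) ⟨insert (.all x φ) Γ, Δ⟩ [⟨insert (φ.subst (sub1 x t)) Γ, Δ⟩]
  | allR {Γ Δ : Finset Fm} {x : ℕ} {φ : Fm} :
      (∀ ψ ∈ Γ ∪ Δ, x ∉ Fm.fv ψ) →
      Inf (.allR x φ) ⟨Γ, insert (.all x φ) Δ⟩ [⟨Γ, insert φ Δ⟩]
  | exL {Γ Δ : Finset Fm} {x : ℕ} {φ : Fm} :
      (∀ ψ ∈ Γ ∪ Δ, x ∉ Fm.fv ψ) →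
      Inf (.exL x φ) ⟨insert (.ex x φ) Γ, Δ⟩ [⟨insert φ Γ, Δ⟩]
  | exR {Γ Δ : Finset Fm} {x : ℕ} {t : Tm} {φ : Fm} :
      Inf (.exR x t φ) ⟨Γ, insert (.ex x φ) Δ⟩ [⟨Γ, insert (φ.subst (sub1 x t)) Δ⟩]
  | eqR {Γ Δ : Finset Fm} {t : Tm} :
      Inf (.eqR t) ⟨Γ, insert (.eq t t) Δ⟩ []
  | eqL {Γ Δ : Finset Fm} {v1 v2 : ℕ} {t u : Tm} :
      Inf (.eqL v1 v2 t u)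
        ⟨insert (.eq t u) (Γ.image (Fm.subst (sub2 v1 v2 t u))),
          Δ.image (Fm.subst (sub2 v1 v2 t u))⟩
        [⟨Γ.image (Fm.subst (sub2 v1 v2 u t)), Δ.image (Fm.subst (sub2 v1 v2 u t))⟩]
  | eqLa {Γ Δ : Finset Fm} {v1 v2 : ℕ} {t u : Tm} :
      Inf (.eqLa v1 v2 t u)
        ⟨insert (.eq t u) (Γ.image (Fm.subst (sub2 v1 v2 t u))),
          Δ.image (Fm.subst (sub2 v1 v2 t u))⟩
        [⟨insert (.eq t u) (Γ.image (Fm.subst (sub2 v1 v2 u t))),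
          Δ.image (Fm.subst (sub2 v1 v2 u t))⟩]
  | add1R1 {Γ Δ : Finset Fm} {b : Tm} :
      Inf .add1R1 ⟨Γ, insert (.add1 .zero b b) Δ⟩ []
  | add1R2 {Γ Δ : Finset Fm} {a b c : Tm} :
      Inf (.add1R2 a b c) ⟨Γ, insert (.add1 (.s a) b (.s c)) Δ⟩ [⟨Γ, insert (.add1 a b c) Δ⟩]
  | add2R1 {Γ Δ : Finset Fm} {b : Tm} :
      Inf .add2R1 ⟨Γ, insert (.add2 .zero b b) Δ⟩ []
  | add2R2 {Γ Δ : Finset Fm} {a b c : Tm} :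
      Inf (.add2R2 a b c) ⟨Γ, insert (.add2 (.s a) b c) Δ⟩ [⟨Γ, insert (.add2 a (.s b) c) Δ⟩]
  | caseAdd1 {Γ Δ : Finset Fm} {a b c : Tm} {x y z : ℕ} :
      x ≠ y → x ≠ z → y ≠ z →
      (∀ ψ ∈ insert (Fm.add1 a b c) (Γ ∪ Δ), x ∉ Fm.fv ψ ∧ y ∉ Fm.fv ψ ∧ z ∉ Fm.fv ψ) →
      Inf (.caseAdd1 a b c x y z) ⟨insert (.add1 a b c) Γ, Δ⟩
        [⟨insert (.eq a .zero) (insert (.eq b (.var y)) (insert (.eq c (.var y)) Γ)), Δ⟩,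
         ⟨insert (.eq a (.s (.var x))) (insert (.eq b (.var y)) (insert (.eq c (.s (.var z)))
            (insert (.add1 (.var x) (.var y) (.var z)) Γ))), Δ⟩]
  | caseAdd2 {Γ Δ : Finset Fm} {a b c : Tm} {x y z : ℕ} :
      x ≠ y → x ≠ z → y ≠ z →
      (∀ ψ ∈ insert (Fm.add2 a b c) (Γ ∪ Δ), x ∉ Fm.fv ψ ∧ y ∉ Fm.fv ψ ∧ z ∉ Fm.fv ψ) →
      Inf (.caseAdd2 a b c x y z) ⟨insert (.add2 a b c) Γ, Δ⟩
        [⟨insert (.eq a .zero) (insert (.eq b (.var y)) (insert (.eq c (.var y)) Γ)), Δ⟩,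
         ⟨insert (.eq a (.s (.var x))) (insert (.eq b (.var y)) (insert (.eq c (.var z))
            (insert (.add2 (.var x) (.s (.var y)) (.var z)) Γ))), Δ⟩]

/-- A labeling of tree nodes (finite sequences of naturals) by sequents and rules;
    `none` means the node is not in the tree. -/
abbrev Lbl : Type := List ℕ → Option (Seq × Rule)

/-- The children of `σ` are labeled exactly by the premise list `prems`. -/
def childrenOK (f : Lbl) (σ : List ℕ) (prems : List Seq) : Prop :=
  (∀ i : Fin prems.length, ∃ r', f (σ ++ [(i : ℕ)]) = some (prems.get i, r')) ∧
  (∀ i : ℕ, prems.length ≤ i → f (σ ++ [i]) = none)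

/-- Derivation trees (possibly infinite): prefix-closed domain, each non-bud node
    is the conclusion of a rule whose premises label its children, buds are leaves. -/
structure DTree where
  label : Lbl
  root_def : label [] ≠ none
  prefix_closed : ∀ σ τ : List ℕ, label (σ ++ τ) ≠ none → label σ ≠ none
  wf : ∀ σ S r, label σ = some (S, r) →
    (r = Rule.bud ∧ ∀ i : ℕ, label (σ ++ [i]) = none) ∨
    (r ≠ Rule.bud ∧ ∃ prems, Inf r S prems ∧ childrenOK label σ prems)

/-- `σ` is a bud of the labeling `f`. -/
def budAt (f : Lbl) (σ : List ℕ) : Prop := ∃ S, f σ = some (S, Rule.bud)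

/-- `σ` is an inner node of `f` labeled with the sequent `S`. -/
def innerWith (f : Lbl) (σ : List ℕ) (S : Seq) : Prop :=
  ∃ r, f σ = some (S, r) ∧ r ≠ Rule.bud

/-- A pre-proof: a finite derivation tree together with a function assigning to
    each bud a companion, i.e. an inner node labeled with the same sequent. -/
structure PreProof where
  D : DTree
  fin : {σ : List ℕ | D.label σ ≠ none}.Finite
  C : List ℕ → List ℕ
  comp : ∀ σ S, D.label σ = some (S, Rule.bud) → innerWith D.label (C σ) S

/-- Cycle-normality: every companion is an ancestor of its bud. -/
def PreProof.CycleNormal (P : PreProof) : Prop :=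
  ∀ σ S, P.D.label σ = some (S, Rule.bud) → P.C σ <+: σ

/-- `T` is the tree-unfolding of the pre-proof `P`: it agrees with `P.D` on
    non-bud nodes, below a bud it continues as below the bud's companion, and it
    is empty on nodes not in `P.D` having no bud prefix. -/
def IsUnfolding (P : PreProof) (T : Lbl) : Prop :=
  (∀ σ, P.D.label σ ≠ none → ¬ budAt P.D.label σ → T σ = P.D.label σ) ∧
  (∀ σ₁ σ₂ : List ℕ, budAt P.D.label σ₁ → T (σ₁ ++ σ₂) = T (P.C σ₁ ++ σ₂)) ∧
  (∀ σ, P.D.label σ = none → (∀ σ₁, σ₁ <+: σ → ¬ budAt P.D.label σ₁) → T σ = none)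

/-- An infinite path in the labeling `f`. -/
def IsInfPath (f : Lbl) (p : ℕ → List ℕ) : Prop :=
  (∀ i, f (p i) ≠ none) ∧ (∀ i, ∃ n : ℕ, p (i + 1) = p i ++ [n])

/-- Atomic formulas with an inductive predicate. -/
def isIndAtom (φ : Fm) : Prop :=
  (∃ a b c, φ = Fm.add1 a b c) ∨ (∃ a b c, φ = Fm.add2 a b c)

/-- A progressing trace step: the traced formula is the principal formula of a
    case rule and its successor (in the corresponding case distinction, child `j`)
    is a case-descendant. -/
def progStep : Rule → ℕ → Fm → Fm → Prop := fun r j τ τ' =>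
  match r with
  | .caseAdd1 a b c x y z =>
      τ = Fm.add1 a b c ∧ j = 1 ∧ τ' = Fm.add1 (.var x) (.var y) (.var z)
  | .caseAdd2 a b c x y z =>
      τ = Fm.add2 a b c ∧ j = 1 ∧ τ' = Fm.add2 (.var x) (.s (.var y)) (.var z)
  | _ => False

/-- The trace connection relation between the traced formula at a conclusion of a
    rule `r` and the traced formula at its `j`-th premise. -/
def connStep : Rule → ℕ → Fm → Fm → Prop := fun r j τ τ' =>
  match r with
  | .subst θ => τ = Fm.subst θ τ'
  | .eqL v1 v2 t u =>
      ∃ F : Fm, τ = Fm.subst (sub2 v1 v2 t u) F ∧ τ' = Fm.subst (sub2 v1 v2 u t) F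
  | .eqLa v1 v2 t u =>
      ∃ F : Fm, τ = Fm.subst (sub2 v1 v2 t u) F ∧ τ' = Fm.subst (sub2 v1 v2 u t) F
  | .caseAdd1 a b c x y z => τ' = τ ∨ progStep (.caseAdd1 a b c x y z) j τ τ'
  | .caseAdd2 a b c x y z => τ' = τ ∨ progStep (.caseAdd2 a b c x y z) j τ τ'
  | _ => τ' = τ

/-- `τ` is a trace following the tail from `k` of the path `p` in `f`. -/
def IsTraceFrom (f : Lbl) (p : ℕ → List ℕ) (k : ℕ) (τ : ℕ → Fm) : Prop :=
  ∀ i, k ≤ i →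
    ∃ (S : Seq) (r : Rule) (j : ℕ), f (p i) = some (S, r) ∧ τ i ∈ S.ant ∧ isIndAtom (τ i) ∧
      p (i + 1) = p i ++ [j] ∧ connStep r j (τ i) (τ (i + 1))

/-- The trace `τ` progresses at position `i` of the path `p`. -/
def progAt (f : Lbl) (p : ℕ → List ℕ) (τ : ℕ → Fm) (i : ℕ) : Prop :=
  ∃ (S : Seq) (r : Rule) (j : ℕ), f (p i) = some (S, r) ∧ p (i + 1) = p i ++ [j] ∧
    progStep r j (τ i) (τ (i + 1))

/-- The global trace condition for a (possibly infinite) labeling `f`. -/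
def GTC (f : Lbl) : Prop :=
  ∀ p : ℕ → List ℕ, IsInfPath f p →
    ∃ (k : ℕ) (τ : ℕ → Fm), IsTraceFrom f p k τ ∧
      ∀ n : ℕ, ∃ i, n ≤ i ∧ k ≤ i ∧ progAt f p τ i

/-- A pre-proof is a proof when its tree-unfolding satisfies the
    global trace condition. -/
def PreProof.IsProof (P : PreProof) : Prop := ∃ T : Lbl, IsUnfolding P T ∧ GTC T

/-- Some rule satisfying `Q` occurs in the labeling `f`. -/
def usesRule (f : Lbl) (Q : Rule → Prop) : Prop := ∃ σ S r, f σ = some (S, r) ∧ Q r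

/-- No occurrence of (Cut). -/
def PreProof.CutFree (P : PreProof) : Prop :=
  ¬ usesRule P.D.label (fun r => ∃ φ, r = Rule.cut φ)

/-- No occurrence of (= L_a): the pre-proof is a `CLKID^ω` pre-proof. -/
def PreProof.NoEqLa (P : PreProof) : Prop :=
  ¬ usesRule P.D.label (fun r => ∃ v1 v2 t u, r = Rule.eqLa v1 v2 t u)

/-- No occurrence of (= L): the pre-proof is a `CLKID^ω_a` pre-proof. -/
def PreProof.NoEqL (P : PreProof) : Prop :=
  ¬ usesRule P.D.label (fun r => ∃ v1 v2 t u, r = Rule.eqL v1 v2 t u)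

/-- The conclusion of the pre-proof is the sequent `S`. -/
def PreProof.Concl (P : PreProof) (S : Seq) : Prop := ∃ r, P.D.label [] = some (S, r)

/-- Provability in `CLKID^ω`. -/
def ProvableW (S : Seq) : Prop :=
  ∃ P : PreProof, P.IsProof ∧ P.NoEqLa ∧ P.Concl S

/-- Provability in `CLKID^ω_a`. -/
def ProvableWa (S : Seq) : Prop :=
  ∃ P : PreProof, P.IsProof ∧ P.NoEqL ∧ P.Concl S

/-- Cut-free provability in `CLKID^ω`. -/
def CutFreeProvableW (S : Seq) : Prop :=
  ∃ P : PreProof, P.IsProof ∧ P.CutFree ∧ P.NoEqLa ∧ P.Concl S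

/-- The sequent `Add2(x, y, z) ⊢ Add1(x, y, z)`. -/
def goalSeq : Seq :=
  ⟨{Fm.add2 (Tm.var 0) (Tm.var 1) (Tm.var 2)}, {Fm.add1 (Tm.var 0) (Tm.var 1) (Tm.var 2)}⟩

/-- A cut-free cycle-normal `CLKID^ω_a` proof of `Add2(x,y,z) ⊢ Add1(x,y,z)`. -/
def IsCNProofOfGoal (P : PreProof) : Prop :=
  P.IsProof ∧ P.CutFree ∧ P.NoEqL ∧ P.CycleNormal ∧ P.Concl goalSeq

/-- The index of an `Add2` atom with second argument `b` in the sequent `S` is `⊥`. -/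
def IndexBot (S : Seq) (b : Tm) : Prop :=
  ∀ a' b' c', Fm.add1 a' b' c' ∈ S.suc → ¬ DepTm (antSet S) b b'

/-- `σ` is a switching point of `f`: the conclusion of a `(Case Add2)` rule whose
    principal formula has index `⊥`. -/
def SwitchingPoint (f : Lbl) (σ : List ℕ) : Prop :=
  ∃ S a b c x y z, f σ = some (S, Rule.caseAdd2 a b c x y z) ∧ IndexBot S b

/-- `σ` is the conclusion of a `(Case Add2)` rule in `f`. -/
def CaseAdd2At (f : Lbl) (σ : List ℕ) : Prop :=
  ∃ S a b c x y z, f σ = some (S, Rule.caseAdd2 a b c x y z)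

/-- The node `σ` of `f` is labeled with an index sequent. -/
def IndexSequentAt (f : Lbl) (σ : List ℕ) : Prop :=
  ∃ S r, f σ = some (S, r) ∧ IndexSequent S

/-- A finite index path `p 0, …, p N` in `f`:  its first sequent is an index
    sequent, and a step to the left premise (child `0`) of a `(Case Add2)` rule
    only happens at switching points. -/
def IsIndexPathUpTo (f : Lbl) (p : ℕ → List ℕ) (N : ℕ) : Prop :=
  (∀ i, i ≤ N → f (p i) ≠ none) ∧
  (∀ i, i < N → ∃ n : ℕ, p (i + 1) = p i ++ [n]) ∧
  IndexSequentAt f (p 0) ∧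
  (∀ i, i < N → CaseAdd2At f (p i) → p (i + 1) = p i ++ [0] → SwitchingPoint f (p i))

/-- An infinite index path in `f`. -/
def IsInfIndexPath (f : Lbl) (p : ℕ → List ℕ) : Prop :=
  IsInfPath f p ∧
  IndexSequentAt f (p 0) ∧
  (∀ i, CaseAdd2At f (p i) → p (i + 1) = p i ++ [0] → SwitchingPoint f (p i))

/-- The child index chosen by the rightmost path: the right assumption of
    `(Case Add2)`, the unique premise otherwise. -/
def rightIdx : Rule → ℕ := fun r =>
  match r with
  | .caseAdd2 _ _ _ _ _ _ => 1
  | _ => 0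

/-- One step of the rightmost path in `f`. -/
def RightStep (f : Lbl) (σ σ' : List ℕ) : Prop :=
  ∃ S r, f σ = some (S, r) ∧ σ' = σ ++ [rightIdx r] ∧ f σ' ≠ none

/-- `A(Γ ⊢ Δ)` of Lemma `abc_relations`. -/
def Aset (S : Seq) : Set Tm :=
  {a | (∃ b c, Fm.add2 a b c ∈ S.ant) ∨ (∃ b c, Fm.add1 a b c ∈ S.suc) ∨ a = Tm.zero}

/-- `BC(Γ ⊢ Δ)` of Lemma `abc_relations`. -/
def BCset (S : Seq) : Set Tm :=
  {t | (∃ a c, Fm.add2 a t c ∈ S.ant) ∨ (∃ a b, Fm.add2 a b t ∈ S.ant) ∨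
       (∃ a c, Fm.add1 a t c ∈ S.suc) ∨ (∃ a b, Fm.add1 a b t ∈ S.suc)}

/-- The rules that can occur in a cut-free cycle-normal `CLKID^ω_a` proof of
    `Add2(x,y,z) ⊢ Add1(x,y,z)` (plus bud labels). -/
def allowedRule (r : Rule) : Prop :=
  r = Rule.bud ∨ r = Rule.weak ∨ (∃ θ, r = Rule.subst θ) ∨
  (∃ v1 v2 t u, r = Rule.eqLa v1 v2 t u) ∨
  (∃ a b c x y z, r = Rule.caseAdd2 a b c x y z) ∨
  r = Rule.add1R1 ∨ (∃ a b c, r = Rule.add1R2 a b c)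

/-! Send each position of the tree-unfolding to the node of `D` it copies, by walking down the
position and jumping from every bud to its companion; the labelling read off through this map is
an unfolding, and unfoldings are unique. Cutting every branch at the first position whose node
already occurred on the branch, and making it a bud whose companion is that earlier position,
gives a cycle-normal pre-proof with the same unfolding that uses only rules of `D` and buds. It is
finite because the nodes along a branch are now pairwise distinct, so branches are no longer than
the number of nodes of `D`. -/

theorem _root_.List.IsPrefix.ne_of_isPrefix_ne {α : Type*} {l₁ l₂ l₃ : List α} (h₁ : l₁ <+: l₂)
    (h₂ : l₂ <+: l₃) (hne : l₂ ≠ l₃) : l₁ ≠ l₃ := by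
  rintro rfl
  exact hne (h₂.eq_of_length (le_antisymm h₂.length_le h₁.length_le))

theorem _root_.List.prefix_concat_and_ne_iff {α : Type*} {ρ l : List α} {a : α} :
    ρ <+: l ++ [a] ∧ ρ ≠ l ++ [a] ↔ ρ <+: l := by
  rw [List.prefix_concat_iff]
  constructor
  · rintro ⟨hρ | hρ, hne⟩
    exacts [absurd hρ hne, hρ]
  · intro hρ
    exact ⟨Or.inr hρ, hρ.ne_of_isPrefix_ne (List.prefix_append _ _) (by simp)⟩

theorem _root_.List.setOf_prefix_and_ne_concat {α : Type*} (l : List α) (a : α) :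
    {ρ | ρ <+: l ++ [a] ∧ ρ ≠ l ++ [a]} = {ρ | ρ <+: l} :=
  Set.ext fun _ => List.prefix_concat_and_ne_iff

theorem _root_.Set.injOn_setOf_prefix_nil {α β : Type*} (f : List α → β) :
    Set.InjOn f {ρ | ρ <+: []} := by
  simp [List.prefix_nil]

theorem _root_.List.finite_setOf_length_le_forall_mem {α : Type*} {A : Set α} (hA : A.Finite)
    (n : ℕ) : {l : List α | l.length ≤ n ∧ ∀ x ∈ l, x ∈ A}.Finite := by
  have := hA.to_subtype
  refine ((List.finite_length_le A n).image (List.map Subtype.val)).subset ?_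
  rintro l ⟨hl, hmem⟩
  lift l to List A using hmem
  exact ⟨l, by simpa using hl, rfl⟩

def IsInner (f : Lbl) (σ : List ℕ) : Prop := f σ ≠ none ∧ ¬ budAt f σ

lemma budAt.ne_none {f : Lbl} {σ : List ℕ} (h : budAt f σ) : f σ ≠ none := by
  obtain ⟨S, hS⟩ := h
  simp [hS]

namespace DTree

variable (D : DTree)

lemma label_append_eq_none_of_bud {σ τ : List ℕ} {S : Seq}
    (h : D.label σ = some (S, Rule.bud)) (hτ : τ ≠ []) : D.label (σ ++ τ) = none := by
  obtain ⟨i, τ, rfl⟩ := List.exists_cons_of_ne_nil hτ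
  by_contra hne
  have hi : D.label (σ ++ [i]) ≠ none := D.prefix_closed _ τ (by simpa using hne)
  rcases D.wf σ S Rule.bud h with ⟨-, hleaf⟩ | ⟨hne, -⟩
  · exact hi (hleaf i)
  · exact hne rfl

variable {D}

lemma label_append_eq_none {σ : List ℕ} (h : D.label σ = none) (τ : List ℕ) :
    D.label (σ ++ τ) = none :=
  not_not.mp fun hne => D.prefix_closed σ τ hne h

lemma not_budAt_of_prefix_ne {σ ρ : List ℕ} (h : D.label σ ≠ none) (hρ : ρ <+: σ)
    (hne : ρ ≠ σ) : ¬ budAt D.label ρ := by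
  rintro ⟨S, hS⟩
  obtain ⟨τ, rfl⟩ := hρ
  exact h (D.label_append_eq_none_of_bud hS (by rintro rfl; simp at hne))

lemma not_budAt_of_prefix {σ ρ : List ℕ} (h : IsInner D.label σ) (hρ : ρ <+: σ) :
    ¬ budAt D.label ρ := by
  by_cases hne : ρ = σ
  · exact hne ▸ h.2
  · exact not_budAt_of_prefix_ne h.1 hρ hne

end DTree

namespace PreProof

variable (P : PreProof)

open Classical in
noncomputable def resolve (σ : List ℕ) : List ℕ := if budAt P.D.label σ then P.C σ else σ

noncomputable def step (ν : List ℕ) (i : ℕ) : Option (List ℕ) :=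
  (P.D.label (ν ++ [i])).map fun _ => P.resolve (ν ++ [i])

/-- The node of `P.D` of which position `τ` of the tree-unfolding is a copy. -/
noncomputable def source (τ : List ℕ) : Option (List ℕ) := τ.foldlM P.step []

noncomputable def treeUnfolding : Lbl := fun τ => (P.source τ).bind P.D.label

variable {P}

lemma resolve_of_budAt {σ : List ℕ} (h : budAt P.D.label σ) : P.resolve σ = P.C σ := if_pos h

lemma resolve_of_not_budAt {σ : List ℕ} (h : ¬ budAt P.D.label σ) : P.resolve σ = σ :=
  if_neg h

lemma isInner_C {σ : List ℕ} (h : budAt P.D.label σ) : IsInner P.D.label (P.C σ) := by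
  obtain ⟨S, hS⟩ := h
  obtain ⟨r, hr, hrb⟩ := P.comp σ S hS
  refine ⟨by simp [hr], fun ⟨S', hS'⟩ => hrb ?_⟩
  rw [hr] at hS'
  exact (Prod.mk.inj (Option.some.inj hS')).2

lemma isInner_resolve {σ : List ℕ} (h : P.D.label σ ≠ none) :
    IsInner P.D.label (P.resolve σ) := by
  by_cases hb : budAt P.D.label σ
  · rw [resolve_of_budAt hb]
    exact isInner_C hb
  · rw [resolve_of_not_budAt hb]
    exact ⟨h, hb⟩

lemma label_resolve {σ : List ℕ} {S : Seq} {r : Rule} (h : P.D.label σ = some (S, r)) :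
    ∃ r', P.D.label (P.resolve σ) = some (S, r') := by
  by_cases hb : budAt P.D.label σ
  · obtain ⟨S', hS'⟩ := hb
    obtain ⟨r', hr', -⟩ := P.comp σ S' hS'
    rw [h] at hS'
    obtain ⟨rfl, -⟩ := Prod.mk.inj (Option.some.inj hS')
    exact ⟨r', by rw [resolve_of_budAt ⟨S, h ▸ hS'⟩, hr']⟩
  · exact ⟨r, by rw [resolve_of_not_budAt hb, h]⟩

/-- A bud at the root would have to be its own companion. -/
lemma isInner_nil : IsInner P.D.label [] := by
  refine ⟨P.D.root_def, fun hb => (isInner_C hb).2 ?_⟩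
  by_cases hC : P.C [] = []
  · rwa [hC]
  · obtain ⟨S, hS⟩ := hb
    exact absurd (P.D.label_append_eq_none_of_bud hS hC) (isInner_C ⟨S, hS⟩).1

lemma isInner_of_foldlM_step_eq_some {ν μ τ : List ℕ} (hν : IsInner P.D.label ν)
    (h : τ.foldlM P.step ν = some μ) : IsInner P.D.label μ := by
  induction τ generalizing ν with
  | nil =>
    cases h
    exact hν
  | cons i τ ih =>
    simp only [List.foldlM_cons, step, Option.bind_eq_bind, Option.bind_eq_some_iff,
      Option.map_eq_some_iff] at h
    obtain ⟨_, ⟨_, hi, rfl⟩, h⟩ := h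
    exact ih (isInner_resolve (by simp [hi])) h

lemma isInner_of_source_eq_some {τ ν : List ℕ} (h : P.source τ = some ν) :
    IsInner P.D.label ν :=
  isInner_of_foldlM_step_eq_some isInner_nil h

lemma source_append (σ τ : List ℕ) :
    P.source (σ ++ τ) = (P.source σ).bind fun ν => τ.foldlM P.step ν :=
  List.foldlM_append

lemma source_append_congr {ρ ρ' : List ℕ} (h : P.source ρ = P.source ρ') (τ : List ℕ) :
    P.source (ρ ++ τ) = P.source (ρ' ++ τ) := by
  rw [source_append, source_append, h]

lemma source_ne_none_of_prefix {σ τ : List ℕ} (h : P.source τ ≠ none) (hσ : σ <+: τ) :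
    P.source σ ≠ none := by
  obtain ⟨ω, rfl⟩ := hσ
  intro hσ
  simp [source_append, hσ] at h

lemma source_concat (σ : List ℕ) (i : ℕ) :
    P.source (σ ++ [i]) = (P.source σ).bind fun ν => P.step ν i := by
  simp [source_append]

lemma source_eq_of_forall_not_budAt {σ : List ℕ}
    (h : ∀ ρ, ρ <+: σ → ρ ≠ σ → ¬ budAt P.D.label ρ) :
    P.source σ = (P.D.label σ).map fun _ => P.resolve σ := by
  induction σ using List.reverseRecOn with
  | nil =>
    obtain ⟨x, hx⟩ := Option.ne_none_iff_exists'.mp P.D.root_def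
    rw [hx, resolve_of_not_budAt isInner_nil.2]
    rfl
  | append_singleton σ i ih =>
    have h' (ρ : List ℕ) (hρ : ρ <+: σ) : ¬ budAt P.D.label ρ :=
      h ρ (List.prefix_concat_and_ne_iff.mpr hρ).1 (List.prefix_concat_and_ne_iff.mpr hρ).2
    have hσ := h' σ (List.prefix_refl σ)
    rw [source_concat, ih fun ρ hρ _ => h' ρ hρ]
    cases hl : P.D.label σ with
    | none => simp [DTree.label_append_eq_none hl]
    | some x => simp [resolve_of_not_budAt hσ, step]

lemma source_of_label_ne_none {σ : List ℕ} (h : P.D.label σ ≠ none) :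
    P.source σ = some (P.resolve σ) := by
  rw [source_eq_of_forall_not_budAt fun ρ hρ hne => DTree.not_budAt_of_prefix_ne h hρ hne]
  obtain ⟨x, hx⟩ := Option.ne_none_iff_exists'.mp h
  simp [hx]

lemma isUnfolding_treeUnfolding (P : PreProof) : IsUnfolding P P.treeUnfolding := by
  refine ⟨fun σ h hb => ?_, fun σ₁ σ₂ hb => ?_, fun σ h hnb => ?_⟩
  · simp [treeUnfolding, source_of_label_ne_none h, resolve_of_not_budAt hb]
  · have hC := isInner_C hb
    have : P.source σ₁ = P.source (P.C σ₁) := by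
      rw [source_of_label_ne_none hb.ne_none, source_of_label_ne_none hC.1,
        resolve_of_budAt hb, resolve_of_not_budAt hC.2]
    simp only [treeUnfolding, source_append_congr this]
  · simp [treeUnfolding, source_eq_of_forall_not_budAt fun ρ hρ _ => hnb ρ hρ, h]

end PreProof

namespace IsUnfolding

variable {P : PreProof} {T : Lbl}

open PreProof

lemma apply_resolve_append (hT : IsUnfolding P T) (σ τ : List ℕ) :
    T (σ ++ τ) = T (P.resolve σ ++ τ) := by
  by_cases hb : budAt P.D.label σ
  · rw [resolve_of_budAt hb, hT.2.1 σ τ hb]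
  · rw [resolve_of_not_budAt hb]

lemma apply_append (hT : IsUnfolding P T) :
    ∀ (τ : List ℕ) {ν : List ℕ}, IsInner P.D.label ν →
      T (ν ++ τ) = (τ.foldlM P.step ν).bind P.D.label
  | [], ν, hν => by simpa using hT.1 ν hν.1 hν.2
  | i :: τ, ν, hν => by
    rw [List.foldlM_cons]
    cases hi : P.D.label (ν ++ [i]) with
    | none =>
      simp only [step, hi, Option.map_none, Option.bind_eq_bind, Option.bind_none]
      refine hT.2.2 _ (by simpa using DTree.label_append_eq_none hi τ) fun ρ hρ hb => ?_
      rw [← List.singleton_append, ← List.append_assoc] at hρ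
      rcases List.prefix_or_prefix_of_prefix hρ (List.prefix_append _ τ) with hρ' | hρ'
      · rcases List.prefix_concat_iff.mp hρ' with rfl | hρν
        · exact hb.ne_none hi
        · exact DTree.not_budAt_of_prefix hν hρν hb
      · obtain ⟨ω, rfl⟩ := hρ'
        exact hb.ne_none (DTree.label_append_eq_none hi ω)
    | some x =>
      have hin := isInner_resolve (P := P) (σ := ν ++ [i]) (by simp [hi])
      rw [← List.singleton_append, ← List.append_assoc, hT.apply_resolve_append,
        hT.apply_append τ hin]
      simp [step, hi]

lemma eq_treeUnfolding (hT : IsUnfolding P T) : T = P.treeUnfolding :=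
  funext fun τ => by simpa [treeUnfolding, source] using hT.apply_append τ isInner_nil

end IsUnfolding

lemma isUnfolding_iff {P : PreProof} {T : Lbl} : IsUnfolding P T ↔ T = P.treeUnfolding :=
  ⟨IsUnfolding.eq_treeUnfolding, fun h => h ▸ P.isUnfolding_treeUnfolding⟩

namespace PreProof

variable (P : PreProof)

open Classical in
/-- Position `τ` of the tree-unfolding is kept when `source` is injective on its proper
prefixes, and becomes a bud when `τ` repeats the source of one of them. -/
noncomputable def cycleNormalLabel : Lbl := fun τ =>
  if Set.InjOn P.source {ρ | ρ <+: τ} then P.treeUnfolding τ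
  else if Set.InjOn P.source {ρ | ρ <+: τ ∧ ρ ≠ τ} then
    (P.treeUnfolding τ).map fun p => (p.1, Rule.bud)
  else none

open Classical in
noncomputable def cycleNormalComp (τ : List ℕ) : List ℕ :=
  if h : ∃ ρ, ρ <+: τ ∧ ρ ≠ τ ∧ P.source ρ = P.source τ then h.choose else []

variable {P}

lemma treeUnfolding_ne_none_iff {τ : List ℕ} :
    P.treeUnfolding τ ≠ none ↔ P.source τ ≠ none := by
  cases h : P.source τ with
  | none => simp [treeUnfolding, h]
  | some ν => simpa [treeUnfolding, h] using (isInner_of_source_eq_some h).1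

lemma treeUnfolding_eq_some {τ : List ℕ} {S : Seq} {r : Rule}
    (h : P.treeUnfolding τ = some (S, r)) :
    ∃ ν, P.source τ = some ν ∧ P.D.label ν = some (S, r) ∧ r ≠ Rule.bud := by
  obtain ⟨ν, hν, hl⟩ := Option.bind_eq_some_iff.mp h
  exact ⟨ν, hν, hl, fun hr => (isInner_of_source_eq_some hν).2 ⟨S, hr ▸ hl⟩⟩

lemma cycleNormalLabel_of_injOn {τ : List ℕ} (h : Set.InjOn P.source {ρ | ρ <+: τ}) :
    P.cycleNormalLabel τ = P.treeUnfolding τ :=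
  if_pos h

lemma cycleNormalLabel_of_not_injOn {τ : List ℕ} (h : ¬ Set.InjOn P.source {ρ | ρ <+: τ})
    (h' : Set.InjOn P.source {ρ | ρ <+: τ ∧ ρ ≠ τ}) :
    P.cycleNormalLabel τ = (P.treeUnfolding τ).map fun p => (p.1, Rule.bud) := by
  rw [cycleNormalLabel, if_neg h, if_pos h']

lemma cycleNormalLabel_ne_none_iff {τ : List ℕ} :
    P.cycleNormalLabel τ ≠ none ↔
      P.source τ ≠ none ∧ Set.InjOn P.source {ρ | ρ <+: τ ∧ ρ ≠ τ} := by
  by_cases h : Set.InjOn P.source {ρ | ρ <+: τ}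
  · rw [cycleNormalLabel_of_injOn h, treeUnfolding_ne_none_iff]
    exact (and_iff_left (h.mono fun _ => And.left)).symm
  · by_cases h' : Set.InjOn P.source {ρ | ρ <+: τ ∧ ρ ≠ τ}
    · simpa [cycleNormalLabel_of_not_injOn h h', h'] using treeUnfolding_ne_none_iff
    · simp [cycleNormalLabel, h, h']

lemma rule_eq_bud_of_not_injOn {τ : List ℕ} {S : Seq} {r : Rule}
    (h : P.cycleNormalLabel τ = some (S, r)) (hI : ¬ Set.InjOn P.source {ρ | ρ <+: τ}) :
    r = Rule.bud := by
  have hne : P.cycleNormalLabel τ ≠ none := by simp [h]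
  have hI' := (cycleNormalLabel_ne_none_iff.mp hne).2
  rw [cycleNormalLabel_of_not_injOn hI hI'] at h
  obtain ⟨_, -, h⟩ := Option.map_eq_some_iff.mp h
  exact (Prod.mk.inj h).2.symm

lemma budAt_cycleNormalLabel_iff {τ : List ℕ} :
    budAt P.cycleNormalLabel τ ↔
      P.source τ ≠ none ∧ ¬ Set.InjOn P.source {ρ | ρ <+: τ} ∧
      Set.InjOn P.source {ρ | ρ <+: τ ∧ ρ ≠ τ} := by
  constructor
  · rintro ⟨S, hS⟩
    have hne : P.cycleNormalLabel τ ≠ none := by simp [hS]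
    obtain ⟨hs, h'⟩ := cycleNormalLabel_ne_none_iff.mp hne
    refine ⟨hs, fun h => ?_, h'⟩
    rw [cycleNormalLabel_of_injOn h] at hS
    obtain ⟨-, -, -, hr⟩ := treeUnfolding_eq_some hS
    exact hr rfl
  · rintro ⟨hs, h, h'⟩
    obtain ⟨p, hp⟩ := Option.ne_none_iff_exists'.mp (treeUnfolding_ne_none_iff.mpr hs)
    exact ⟨p.1, by simp [cycleNormalLabel_of_not_injOn h h', hp]⟩

lemma map_fst_cycleNormalLabel {τ : List ℕ}
    (h : Set.InjOn P.source {ρ | ρ <+: τ ∧ ρ ≠ τ}) :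
    (P.cycleNormalLabel τ).map Prod.fst = (P.treeUnfolding τ).map Prod.fst := by
  by_cases hI : Set.InjOn P.source {ρ | ρ <+: τ}
  · rw [cycleNormalLabel_of_injOn hI]
  · rw [cycleNormalLabel_of_not_injOn hI h, Option.map_map]
    rfl

lemma map_fst_treeUnfolding_concat {τ ν : List ℕ} (h : P.source τ = some ν) (i : ℕ) :
    (P.treeUnfolding (τ ++ [i])).map Prod.fst = (P.D.label (ν ++ [i])).map Prod.fst := by
  cases hi : P.D.label (ν ++ [i]) with
  | none => simp [treeUnfolding, source_concat, h, step, hi]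
  | some x =>
    obtain ⟨r', hr'⟩ := label_resolve hi
    simp [treeUnfolding, source_concat, h, step, hi, hr']

lemma childrenOK_cycleNormalLabel {τ ν : List ℕ} {prems : List Seq}
    (hI : Set.InjOn P.source {ρ | ρ <+: τ}) (hν : P.source τ = some ν)
    (hch : childrenOK P.D.label ν prems) : childrenOK P.cycleNormalLabel τ prems := by
  have hfst (i : ℕ) : (P.cycleNormalLabel (τ ++ [i])).map Prod.fst =
      (P.D.label (ν ++ [i])).map Prod.fst := by
    rw [map_fst_cycleNormalLabel (by rwa [List.setOf_prefix_and_ne_concat]),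
      map_fst_treeUnfolding_concat hν]
  refine ⟨fun i => ?_, fun i hi => ?_⟩
  · obtain ⟨r, hr⟩ := hch.1 i
    have := hfst i
    rw [hr] at this
    obtain ⟨⟨S, r'⟩, hS, hSi⟩ := Option.map_eq_some_iff.mp this
    obtain rfl : S = prems.get i := hSi
    exact ⟨r', hS⟩
  · simpa [hch.2 i hi] using hfst i

variable (P : PreProof)

noncomputable def cycleNormalTree : DTree where
  label := P.cycleNormalLabel
  root_def := cycleNormalLabel_ne_none_iff.mpr
    ⟨by simp [source], (Set.injOn_setOf_prefix_nil _).mono fun _ => And.left⟩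
  prefix_closed σ τ h := by
    obtain ⟨hs, hI⟩ := cycleNormalLabel_ne_none_iff.mp h
    refine cycleNormalLabel_ne_none_iff.mpr
      ⟨source_ne_none_of_prefix hs (List.prefix_append _ _), ?_⟩
    rcases eq_or_ne τ [] with rfl | hτ
    · simpa using hI
    · exact hI.mono fun ρ (hρ : ρ <+: σ ∧ ρ ≠ σ) =>
        show ρ <+: σ ++ τ ∧ ρ ≠ σ ++ τ from
        ⟨hρ.1.trans (List.prefix_append _ _),
          hρ.1.ne_of_isPrefix_ne (List.prefix_append _ _) (by simpa using hτ)⟩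
  wf τ S r h := by
    by_cases hI : Set.InjOn P.source {ρ | ρ <+: τ}
    · rw [cycleNormalLabel_of_injOn hI] at h
      obtain ⟨ν, hν, hl, hr⟩ := treeUnfolding_eq_some h
      rcases P.D.wf ν S r hl with ⟨hb, -⟩ | ⟨-, prems, hinf, hch⟩
      · exact absurd hb hr
      · exact Or.inr ⟨hr, prems, hinf, childrenOK_cycleNormalLabel hI hν hch⟩
    · refine Or.inl ⟨rule_eq_bud_of_not_injOn h hI, fun i => ?_⟩
      by_contra hi
      have := (cycleNormalLabel_ne_none_iff.mp hi).2
      rw [List.setOf_prefix_and_ne_concat] at this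
      exact hI this

variable {P}

lemma length_le_of_injOn {τ : List ℕ} (hs : P.source τ ≠ none)
    (hI : Set.InjOn P.source {ρ | ρ <+: τ ∧ ρ ≠ τ}) :
    τ.length ≤ P.fin.toFinset.card := by
  have hlen {k : ℕ} (hk : k ∈ Finset.range τ.length) : τ.take k <+: τ ∧ τ.take k ≠ τ :=
    ⟨List.take_prefix _ _, fun h => by
      have := congrArg List.length h
      simp at this hk
      omega⟩
  have hmaps : Set.MapsTo (fun k => P.source (τ.take k)) (Finset.range τ.length)
      (P.fin.toFinset.image some) := fun k hk => by
    obtain ⟨ν, hν⟩ := Option.ne_none_iff_exists'.mp (source_ne_none_of_prefix hs (hlen hk).1)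
    simp only [Finset.coe_image, Set.mem_image, hν, Option.some_inj]
    exact ⟨ν, P.fin.mem_toFinset.mpr (isInner_of_source_eq_some hν).1, rfl⟩
  have hinj : Set.InjOn (fun k => P.source (τ.take k)) (Finset.range τ.length) :=
    fun a ha b hb h => by
      have := congrArg List.length (hI (hlen ha) (hlen hb) h)
      simp only [List.length_take] at this
      simp at ha hb
      omega
  simpa using (Finset.card_le_card_of_injOn _ hmaps hinj).trans Finset.card_image_le

lemma exists_node_mem_of_mem {τ : List ℕ} {x : ℕ} (hs : P.source τ ≠ none) (hx : x ∈ τ) :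
    ∃ σ, P.D.label σ ≠ none ∧ x ∈ σ := by
  obtain ⟨τ₁, τ₂, rfl⟩ := List.append_of_mem hx
  have hs' := source_ne_none_of_prefix (σ := τ₁ ++ [x]) hs ⟨τ₂, by simp⟩
  obtain ⟨ν, hν⟩ :=
    Option.ne_none_iff_exists'.mp (source_ne_none_of_prefix hs' ⟨[x], rfl⟩)
  rw [source_concat, hν] at hs'
  exact ⟨ν ++ [x], by simpa [step] using hs', by simp⟩

lemma finite_cycleNormalLabel_ne_none (P : PreProof) :
    {τ | P.cycleNormalLabel τ ≠ none}.Finite := by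
  apply (List.finite_setOf_length_le_forall_mem (P.fin.biUnion fun σ _ => σ.finite_toSet)
    P.fin.toFinset.card).subset
  intro τ hτ
  obtain ⟨hs, hI⟩ := cycleNormalLabel_ne_none_iff.mp hτ
  refine ⟨length_le_of_injOn hs hI, fun x hx => ?_⟩
  obtain ⟨σ, hσ, hxσ⟩ := exists_node_mem_of_mem hs hx
  exact Set.mem_biUnion hσ hxσ

lemma cycleNormalComp_spec {τ : List ℕ} (h : budAt P.cycleNormalLabel τ) :
    P.cycleNormalComp τ <+: τ ∧ P.cycleNormalComp τ ≠ τ ∧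
      P.source (P.cycleNormalComp τ) = P.source τ := by
  obtain ⟨-, hI, hI'⟩ := budAt_cycleNormalLabel_iff.mp h
  have hex : ∃ ρ, ρ <+: τ ∧ ρ ≠ τ ∧ P.source ρ = P.source τ := by
    simp only [Set.InjOn, Set.mem_ofPred_eq, not_forall] at hI
    obtain ⟨ρ₁, hρ₁, ρ₂, hρ₂, heq, hne⟩ := hI
    by_cases h₁ : ρ₁ = τ
    · subst h₁
      exact ⟨ρ₂, hρ₂, fun h => hne h.symm, heq.symm⟩
    · refine ⟨ρ₁, hρ₁, h₁, heq.trans ?_⟩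
      by_cases h₂ : ρ₂ = τ
      · rw [h₂]
      · exact absurd (hI' ⟨hρ₁, h₁⟩ ⟨hρ₂, h₂⟩ heq) hne
  rw [cycleNormalComp, dif_pos hex]
  exact hex.choose_spec

variable (P)

noncomputable def cycleNormalize : PreProof where
  D := P.cycleNormalTree
  fin := P.finite_cycleNormalLabel_ne_none
  C := P.cycleNormalComp
  comp σ S h := by
    change P.cycleNormalLabel σ = _ at h
    obtain ⟨hpre, hne, hsrc⟩ := cycleNormalComp_spec ⟨S, h⟩
    obtain ⟨-, hnI, hI⟩ := budAt_cycleNormalLabel_iff.mp ⟨S, h⟩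
    have hpre' : Set.InjOn P.source {ρ | ρ <+: P.cycleNormalComp σ} :=
      hI.mono fun ρ (hρ : ρ <+: _) => show ρ <+: σ ∧ ρ ≠ σ from
        ⟨hρ.trans hpre, hρ.ne_of_isPrefix_ne hpre hne⟩
    rw [cycleNormalLabel_of_not_injOn hnI hI] at h
    obtain ⟨⟨S', r⟩, hu, hS'⟩ := Option.map_eq_some_iff.mp h
    obtain rfl : S' = S := congrArg Prod.fst hS'
    obtain ⟨-, -, -, hr⟩ := treeUnfolding_eq_some hu
    refine ⟨r, ?_, hr⟩
    change P.cycleNormalLabel _ = _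
    rwa [cycleNormalLabel_of_injOn hpre', treeUnfolding, hsrc]

variable {P}

lemma cycleNormal_cycleNormalize : P.cycleNormalize.CycleNormal :=
  fun _ S h => (cycleNormalComp_spec ⟨S, h⟩).1

lemma exists_budAt_prefix {σ : List ℕ} (hs : P.source σ ≠ none)
    (h : ¬ Set.InjOn P.source {ρ | ρ <+: σ}) :
    ∃ π, π <+: σ ∧ budAt P.cycleNormalLabel π := by
  induction σ using List.reverseRecOn with
  | nil => exact absurd (Set.injOn_setOf_prefix_nil _) h
  | append_singleton σ i ih =>
    by_cases hσ : Set.InjOn P.source {ρ | ρ <+: σ}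
    · refine ⟨σ ++ [i], List.prefix_refl _, budAt_cycleNormalLabel_iff.mpr ⟨hs, h, ?_⟩⟩
      rwa [List.setOf_prefix_and_ne_concat]
    · obtain ⟨π, hπ, hb⟩ := ih (source_ne_none_of_prefix hs (List.prefix_append _ _)) hσ
      exact ⟨π, hπ.trans (List.prefix_append _ _), hb⟩

lemma isUnfolding_cycleNormalize (P : PreProof) :
    IsUnfolding P.cycleNormalize P.treeUnfolding := by
  refine ⟨fun σ h hb => ?_, fun σ₁ σ₂ hb => ?_, fun σ h hnb => ?_⟩
  · change P.cycleNormalLabel σ ≠ none at h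
    change ¬ budAt P.cycleNormalLabel σ at hb
    obtain ⟨hs, hI'⟩ := cycleNormalLabel_ne_none_iff.mp h
    by_cases hI : Set.InjOn P.source {ρ | ρ <+: σ}
    · exact (cycleNormalLabel_of_injOn hI).symm
    · exact absurd (budAt_cycleNormalLabel_iff.mpr ⟨hs, hI, hI'⟩) hb
  · simp only [treeUnfolding, source_append_congr (cycleNormalComp_spec hb).2.2.symm]
    rfl
  · by_contra hu
    have hs := treeUnfolding_ne_none_iff.mp hu
    have hI : ¬ Set.InjOn P.source {ρ | ρ <+: σ ∧ ρ ≠ σ} := fun hI =>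
      cycleNormalLabel_ne_none_iff.mpr ⟨hs, hI⟩ h
    obtain ⟨π, hπ, hb⟩ := exists_budAt_prefix hs fun h' => hI (h'.mono fun _ => And.left)
    exact hnb π hπ hb

lemma usesRule_cycleNormalize {r : Rule} (h : usesRule P.cycleNormalize.D.label (· = r)) :
    r = Rule.bud ∨ usesRule P.D.label (· = r) := by
  obtain ⟨σ, S, r, hσ, rfl⟩ := h
  change P.cycleNormalLabel σ = _ at hσ
  by_cases hI : Set.InjOn P.source {ρ | ρ <+: σ}
  · rw [cycleNormalLabel_of_injOn hI] at hσ
    obtain ⟨ν, -, hν, -⟩ := treeUnfolding_eq_some hσ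
    exact Or.inr ⟨ν, S, r, hν, rfl⟩
  · exact Or.inl (rule_eq_bud_of_not_injOn hσ hI)

end PreProof

/-- **Cycle-normalization.** Every pre-proof has a cycle-normal
    pre-proof with the same tree-unfolding, using (apart from buds) only rules
    that occur in the original pre-proof. -/
theorem cycle_normalization (P : PreProof) :
    ∃ P' : PreProof, P'.CycleNormal ∧
      (∀ T : Lbl, IsUnfolding P T ↔ IsUnfolding P' T) ∧
      (∀ r : Rule, usesRule P'.D.label (· = r) → r = Rule.bud ∨ usesRule P.D.label (· = r)) := by
  refine ⟨P.cycleNormalize, PreProof.cycleNormal_cycleNormalize, fun T => ?_,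
    fun _ => PreProof.usesRule_cycleNormalize⟩
  have hsame := isUnfolding_iff.mp (PreProof.isUnfolding_cycleNormalize P)
  rw [isUnfolding_iff, isUnfolding_iff, ← hsame]

end CLKID
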